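/- For every k ≥ 1, the Möbius transformation (PM)^k P³ sends ∞ to (4k+3)/2, and P(PM)^{k-1}P³ sends ∞ to (4k+1)/(4k-1), where P: x ↦ 1 + 1/x and M: x ↦ 1/(1+x). -/

import Mathlib

/-!
`PM` is the translation `x ↦ x + 2`, so `(PM)^k P³ (∞) = P³(∞) + 2k = 3/2 + 2k`; applying
`P : x ↦ 1 + 1/x` to `3/2 + 2(k-1) = (4k-1)/2` gives `(4k+1)/(4k-1)`.
-/

/-- The matrix of the Möbius transformation `P : x ↦ 1 + 1/x`. -/
def Pm : Matrix (Fin 2) (Fin 2) ℤ := !![1, 1; 1, 0]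

/-- The matrix of the Möbius transformation `M : x ↦ 1/(1+x)`. -/
def Mm : Matrix (Fin 2) (Fin 2) ℤ := !![0, 1; 1, 1]

/-- The image `G(∞)` of the point at infinity under the fractional linear
transformation with matrix `A`, namely `A₀₀ / A₁₀`. -/
def mobInf (A : Matrix (Fin 2) (Fin 2) ℤ) : ℚ := (A 0 0 : ℚ) / (A 1 0)

lemma upperUnipotent_pow (a : ℤ) (n : ℕ) : !![1, a; 0, 1] ^ n = !![1, n * a; 0, 1] := by
  induction n with
  | zero => simp [Matrix.one_fin_two]
  | succ n ih =>
    rw [pow_succ, ih, Matrix.mul_fin_two]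
    simp [add_mul, add_comm]

lemma Pm_mul_Mm : Pm * Mm = !![1, 2; 0, 1] := by
  simp [Pm, Mm]

lemma Pm_pow_three : Pm ^ 3 = !![3, 2; 2, 1] := by
  simp [Pm, pow_succ]

lemma mobInf_upperUnipotent_mul (t : ℤ) {A : Matrix (Fin 2) (Fin 2) ℤ} (hA : A 1 0 ≠ 0) :
    mobInf (!![1, t; 0, 1] * A) = mobInf A + t := by
  have hA' : (A 1 0 : ℚ) ≠ 0 := by exact_mod_cast hA
  simp only [mobInf, Matrix.mul_apply, Fin.sum_univ_two, Matrix.of_apply, Matrix.cons_val',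
    Matrix.cons_val_zero, Matrix.cons_val_fin_one, Matrix.cons_val_one, one_mul, zero_mul,
    zero_add, Int.cast_add, Int.cast_mul]
  field_simp

lemma mobInf_Pm_mul {A : Matrix (Fin 2) (Fin 2) ℤ} (hA : A 0 0 ≠ 0) :
    mobInf (Pm * A) = 1 + (mobInf A)⁻¹ := by
  have hA' : (A 0 0 : ℚ) ≠ 0 := by exact_mod_cast hA
  simp only [mobInf, Pm, Matrix.mul_apply, Fin.sum_univ_two, Matrix.of_apply, Matrix.cons_val',
    Matrix.cons_val_zero, Matrix.cons_val_fin_one, Matrix.cons_val_one, one_mul, zero_mul,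
    add_zero, Int.cast_add, inv_div]
  field_simp

lemma mobInf_Pm_pow_three : mobInf (Pm ^ 3) = 3 / 2 := by
  norm_num [mobInf, Pm_pow_three]

lemma mobInf_Pm_mul_Mm_pow_mul_Pm_pow_three (n : ℕ) :
    mobInf ((Pm * Mm) ^ n * Pm ^ 3) = 3 / 2 + 2 * n := by
  have hP3 : (Pm ^ 3) 1 0 ≠ 0 := by simp [Pm_pow_three]
  rw [Pm_mul_Mm, upperUnipotent_pow, mobInf_upperUnipotent_mul _ hP3, mobInf_Pm_pow_three]
  push_cast
  ring

lemma Pm_mul_Mm_pow_mul_Pm_pow_three_zero_zero_ne_zero (n : ℕ) :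
    ((Pm * Mm) ^ n * Pm ^ 3) 0 0 ≠ 0 := by
  simp [Pm_mul_Mm, upperUnipotent_pow, Pm_pow_three, Matrix.mul_apply, Fin.sum_univ_two]
  omega

/-- For every `k ≥ 1`, `(PM)^k P³ (∞) = (4k+3)/2` and
`P (PM)^(k-1) P³ (∞) = (4k+1)/(4k-1)`. -/
theorem twist_knot_fractions (k : ℕ) (hk : 1 ≤ k) :
    mobInf ((Pm * Mm) ^ k * Pm ^ 3) = (4 * (k : ℚ) + 3) / 2 ∧
    mobInf (Pm * (Pm * Mm) ^ (k - 1) * Pm ^ 3) = (4 * (k : ℚ) + 1) / (4 * (k : ℚ) - 1) := by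
  obtain ⟨j, rfl⟩ := Nat.exists_eq_add_of_le' hk
  refine ⟨by rw [mobInf_Pm_mul_Mm_pow_mul_Pm_pow_three]; ring, ?_⟩
  rw [Nat.add_sub_cancel, mul_assoc,
    mobInf_Pm_mul (Pm_mul_Mm_pow_mul_Pm_pow_three_zero_zero_ne_zero j),
    mobInf_Pm_mul_Mm_pow_mul_Pm_pow_three]
  have h₁ : (3 / 2 + 2 * j : ℚ) ≠ 0 := by positivity
  have h₂ : (4 * (j + 1 : ℕ) - 1 : ℚ) ≠ 0 := by push_cast; linarith [(j.cast_nonneg : (0 : ℚ) ≤ j)]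
  rw [eq_div_iff h₂]
  field_simp
  push_cast
  ring
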